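/- arXiv:math/0609510 — 3 statements merged into one kernel-verified Lean document; each statement's English description precedes it below -/
import Mathlib

section
/- Let a, b be integers, not both zero, such that 2^a · 3^b ≠ 1 (which is automatic by unique factorization). Writing q = 2^a · 3^b − 1 ∈ ℚ, the product |q| · |q|₂ · |q|₃ of the real absolute value, the 2-adic absolute value and the 3-adic absolute value of q is a positive integer coprime to 6. -/
/-! The product `N x = |x| * |x|₂ * |x|₃` is multiplicative and equals `1` at `2` and `3`. Clearing
denominators, `2 ^ k * 3 ^ l * (2 ^ a * 3 ^ b - 1)` is a nonzero integer `n` for suitable `k, l : ℕ`,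
so `N (2 ^ a * 3 ^ b - 1) = N n`, and on a nonzero integer `N` strips the powers of `2` and `3`
from `|n|`, leaving its part prime to `6`. That `2 ^ a * 3 ^ b ≠ 1` is read off from the 2-adic and
3-adic valuations. -/

/-- The `S`-norm of `ℚ` for `S = {∞, 2, 3}`. -/
def normS : ℚ →*₀ ℚ where
  toFun x := |x| * padicNorm 2 x * padicNorm 3 x
  map_zero' := by simp
  map_one' := by simp
  map_mul' x y := by simp only [abs_mul, padicNorm.mul]; ring

lemma normS_apply (x : ℚ) : normS x = |x| * padicNorm 2 x * padicNorm 3 x := rfl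

lemma normS_two : normS 2 = 1 := by
  have h2 : padicNorm 2 (2 : ℚ) = 2⁻¹ := by
    exact_mod_cast padicNorm.padicNorm_p_of_prime (p := 2)
  have h3 : padicNorm 3 (2 : ℚ) = 1 := by
    exact_mod_cast (padicNorm.nat_eq_one_iff (p := 3) 2).mpr (by norm_num)
  rw [normS_apply, h2, h3]
  norm_num

lemma normS_three : normS 3 = 1 := by
  have h2 : padicNorm 2 (3 : ℚ) = 1 := by
    exact_mod_cast (padicNorm.nat_eq_one_iff (p := 2) 3).mpr (by norm_num)
  have h3 : padicNorm 3 (3 : ℚ) = 3⁻¹ := by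
    exact_mod_cast padicNorm.padicNorm_p_of_prime (p := 3)
  rw [normS_apply, h2, h3]
  norm_num

lemma normS_neg (x : ℚ) : normS (-x) = normS x := by
  simp only [normS_apply, abs_neg, padicNorm.neg]

lemma normS_abs (x : ℚ) : normS |x| = normS x := by
  rcases abs_choice x with h | h <;> rw [h]
  exact normS_neg x

lemma normS_natCast_of_not_dvd {m : ℕ} (h2 : ¬2 ∣ m) (h3 : ¬3 ∣ m) : normS m = m := by
  rw [normS_apply, (padicNorm.nat_eq_one_iff m).mpr h2, (padicNorm.nat_eq_one_iff m).mpr h3,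
    Nat.abs_cast, mul_one, mul_one]

lemma exists_normS_intCast_eq (n : ℤ) (hn : n ≠ 0) :
    ∃ m : ℤ, 0 < m ∧ Int.gcd m 6 = 1 ∧ normS n = m := by
  obtain ⟨i, n', h2n', hn'⟩ :=
    Nat.exists_eq_pow_mul_and_not_dvd (Int.natAbs_ne_zero.mpr hn) 2 (by norm_num)
  obtain ⟨j, m, h3m, rfl⟩ :=
    Nat.exists_eq_pow_mul_and_not_dvd (n := n') (by rintro rfl; simp at h2n') 3 (by norm_num)
  have h2m : ¬2 ∣ m := fun h => h2n' (h.mul_left _)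
  refine ⟨m, by exact_mod_cast Nat.pos_of_ne_zero (by rintro rfl; simp at h3m), ?_, ?_⟩
  · show Nat.Coprime m (2 * 3)
    exact (Nat.prime_two.coprime_iff_not_dvd.mpr h2m).symm.mul_right
      (Nat.prime_three.coprime_iff_not_dvd.mpr h3m).symm
  · rw [← normS_abs, ← Int.cast_abs, Int.abs_eq_natAbs, hn']
    push_cast
    rw [map_mul, map_mul, map_pow, map_pow, normS_two, normS_three,
      normS_natCast_of_not_dvd h2m h3m]
    simp

lemma eq_zero_of_two_zpow_mul_three_zpow_eq_one {a b : ℤ} (h : (2 : ℚ) ^ a * 3 ^ b = 1) :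
    a = 0 ∧ b = 0 := by
  have v22 : padicValRat 2 2 = 1 := by exact_mod_cast padicValRat.self (p := 2) one_lt_two
  have v33 : padicValRat 3 3 = 1 := by exact_mod_cast padicValRat.self (p := 3) (by norm_num)
  have v23 : padicValRat 2 3 = 0 := by
    rw [show (3 : ℚ) = (3 : ℕ) by norm_num, padicValRat.of_nat]; simp
  have v32 : padicValRat 3 2 = 0 := by
    rw [show (2 : ℚ) = (2 : ℕ) by norm_num, padicValRat.of_nat]; simp
  have h2 := congrArg (padicValRat 2) h
  have h3 := congrArg (padicValRat 3) h
  rw [padicValRat.mul (by positivity) (by positivity)] at h2 h3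
  simpa [v22, v33, v23, v32] using And.intro h2 h3

theorem stmt_0 (a b : ℤ) (hab : ¬(a = 0 ∧ b = 0)) :
    ∃ m : ℤ, 0 < m ∧ Int.gcd m 6 = 1 ∧
      |(2 : ℚ) ^ a * 3 ^ b - 1| * padicNorm 2 ((2 : ℚ) ^ a * 3 ^ b - 1) *
        padicNorm 3 ((2 : ℚ) ^ a * 3 ^ b - 1) = (m : ℚ) := by
  have hq : (2 : ℚ) ^ a * 3 ^ b - 1 ≠ 0 :=
    sub_ne_zero.mpr fun h => hab (eq_zero_of_two_zpow_mul_three_zpow_eq_one h)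
  obtain ⟨i, k, rfl⟩ : ∃ i k : ℕ, a = i - k := ⟨a.toNat, (-a).toNat, by omega⟩
  obtain ⟨j, l, rfl⟩ : ∃ j l : ℕ, b = j - l := ⟨b.toNat, (-b).toNat, by omega⟩
  have hn : (((2 : ℤ) ^ i * 3 ^ j - 2 ^ k * 3 ^ l : ℤ) : ℚ) =
      ((2 : ℚ) ^ ((i : ℤ) - k) * 3 ^ ((j : ℤ) - l) - 1) * (2 ^ k * 3 ^ l) := by
    rw [zpow_sub₀ two_ne_zero, zpow_sub₀ three_ne_zero]
    simp only [zpow_natCast]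
    field_simp
    push_cast
    ring
  obtain ⟨m, hm0, hm6, hm⟩ := exists_normS_intCast_eq ((2 : ℤ) ^ i * 3 ^ j - 2 ^ k * 3 ^ l)
    (by exact_mod_cast hn ▸ mul_ne_zero hq (by positivity))
  refine ⟨m, hm0, hm6, ?_⟩
  rw [hn, map_mul, map_mul, map_pow, map_pow, normS_two, normS_three] at hm
  simpa [normS_apply] using hm
end

section
/- For every positive integer n, writing n = 2^ν · n' with n' odd, the cardinality of the quotient ring 𝔽₂[x][1/x, 1/(x+1)]/(x^n − 1) equals 2^{n − 2^ν}. -/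
/-!
Since `n = 2^ν n'` and we are in characteristic two, `x^n - 1 = (x + 1)^(2^ν) q` with
`q = (1 + x + ⋯ + x^(n'-1))^(2^ν)`. The factor `(x + 1)^(2^ν)` is inverted by the localization,
while `q(0) = 1` and `q(1) = n' = 1` make `x` and `x + 1` units modulo `q`; so localizing changes
nothing and the ring is `𝔽₂[x]/(q)`, of dimension `deg q = 2^ν (n' - 1) = n - 2^ν` over `𝔽₂`.
-/

open Polynomial

lemma pow_expChar_pow_mul_sub_one {R : Type*} [CommRing R] (p : ℕ) [ExpChar R p] (x : R)
    (ν m : ℕ) :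
    x ^ (p ^ ν * m) - 1 = (x - 1) ^ p ^ ν * (∑ i ∈ Finset.range m, x ^ i) ^ p ^ ν := by
  rw [← mul_pow, mul_comm (x - 1), geom_sum_mul, sub_pow_expChar_pow, one_pow, pow_mul']

lemma Polynomial.natDegree_geom_sum_X {R : Type*} [CommRing R] [Nontrivial R] {m : ℕ}
    (hm : m ≠ 0) : (∑ i ∈ Finset.range m, (X : R[X]) ^ i).natDegree = m - 1 := by
  have h := congrArg natDegree (geom_sum_mul (X : R[X]) m)
  rw [← C_1, (monic_geom_sum_X hm).natDegree_mul (monic_X_sub_C 1), natDegree_X_sub_C,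
    natDegree_X_pow_sub_C] at h
  omega

lemma Polynomial.isCoprime_X_sub_C_of_isUnit_eval {R : Type*} [CommRing R] {p : R[X]} {a : R}
    (h : IsUnit (p.eval a)) : IsCoprime (X - C a) p := by
  obtain ⟨c, hc⟩ : X - C a ∣ p - C (p.eval a) := X_sub_C_dvd_sub_C_eval
  rw [sub_eq_iff_eq_add'.1 hc]
  refine IsCoprime.add_mul_left_right ?_ c
  simpa using (isCoprime_mul_unit_right_right (h.map C) (X - C a) 1).2 isCoprime_one_right

lemma Polynomial.natCard_quotient_span_monic {R : Type*} [CommRing R] {q : R[X]} (hq : q.Monic) :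
    Nat.card (R[X] ⧸ Ideal.span {q}) = Nat.card R ^ q.natDegree := by
  change Nat.card (AdjoinRoot q) = _
  rw [Nat.card_congr (AdjoinRoot.powerBasis' hq).basis.equivFun.toEquiv, Nat.card_fun,
    AdjoinRoot.powerBasis'_dim, Nat.card_fin]

lemma Ideal.Quotient.isUnit_mk_span_singleton_of_isCoprime {R : Type*} [CommRing R] {p q : R}
    (h : IsCoprime p q) : IsUnit (Ideal.Quotient.mk (Ideal.span {q}) p) := by
  obtain ⟨a, b, hab⟩ := h
  refine .of_mul_eq_one (Ideal.Quotient.mk _ a) ?_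
  rw [← map_mul, ← map_one (Ideal.Quotient.mk _), Ideal.Quotient.eq, Ideal.mem_span_singleton]
  exact ⟨-b, by linear_combination hab⟩

lemma IsLocalization.span_singleton_algebraMap_mul_of_mem {R S : Type*} [CommRing R]
    [CommRing S] [Algebra R S] {M : Submonoid R} [IsLocalization M S] {u : R} (hu : u ∈ M)
    (q : R) : Ideal.span {algebraMap R S (u * q)} = (Ideal.span {q}).map (algebraMap R S) := by
  rw [map_mul, Ideal.span_singleton_mul_left_unit (IsLocalization.map_units S ⟨u, hu⟩),
    Ideal.map_span, Set.image_singleton]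

noncomputable def Localization.quotientMapEquivOfIsUnit {R : Type*} [CommRing R]
    (M : Submonoid R) (I : Ideal R) (h : ∀ m ∈ M, IsUnit (Ideal.Quotient.mk I m)) :
    (R ⧸ I) ≃+* (Localization M ⧸ I.map (algebraMap R (Localization M))) :=
  (IsLocalization.atUnits (R ⧸ I) (Algebra.algebraMapSubmonoid (R ⧸ I) M)
    (S := Localization M ⧸ I.map (algebraMap R (Localization M)))
    (by rintro _ ⟨m, hm, rfl⟩; exact h m hm)).toRingEquiv

theorem stmt_8_general (n ν n' : ℕ) (hfac : n = 2 ^ ν * n') (hodd : Odd n') :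
    Nat.card
        (Localization (Submonoid.closure {(X : (ZMod 2)[X]), X + 1}) ⧸
          Ideal.span
            {algebraMap (ZMod 2)[X]
                (Localization (Submonoid.closure {(X : (ZMod 2)[X]), X + 1}))
                (X ^ n - 1)}) = 2 ^ (n - 2 ^ ν) := by
  set M := Submonoid.closure {(X : (ZMod 2)[X]), X + 1}
  set q : (ZMod 2)[X] := (∑ i ∈ Finset.range n', X ^ i) ^ 2 ^ ν
  have hX : (X : (ZMod 2)[X]) = X - C 0 := by rw [C_0, sub_zero]
  have hX1 : (X + 1 : (ZMod 2)[X]) = X - C 1 := by rw [C_1, CharTwo.sub_eq_add]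
  have hdeg : q.natDegree = n - 2 ^ ν := by
    rw [natDegree_pow, natDegree_geom_sum_X hodd.pos.ne', hfac, Nat.mul_sub_one]
  have hunit_X_sub_C (a : ZMod 2) (ha : ∑ i ∈ Finset.range n', a ^ i = 1) :
      IsUnit (Ideal.Quotient.mk (Ideal.span {q}) (X - C a)) :=
    Ideal.Quotient.isUnit_mk_span_singleton_of_isCoprime
      (isCoprime_X_sub_C_of_isUnit_eval (by rw [eval_geom_sum, ha]; exact isUnit_one)).pow_right
  have hunits : ∀ m ∈ M, IsUnit (Ideal.Quotient.mk (Ideal.span {q}) m) := by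
    refine Submonoid.closure_le (S := (IsUnit.submonoid _).comap (Ideal.Quotient.mk _)).2 ?_
    rintro _ (rfl | rfl)
    · exact hX ▸ hunit_X_sub_C 0 (by rw [zero_geom_sum, if_neg hodd.pos.ne'])
    · exact hX1 ▸ hunit_X_sub_C 1 (by rw [one_geom_sum, hodd.natCast_zmod_two])
  have hmem : (X - C 1 : (ZMod 2)[X]) ^ 2 ^ ν ∈ M :=
    pow_mem (hX1 ▸ Submonoid.subset_closure (by simp)) _
  have hfactor : (X ^ n - 1 : (ZMod 2)[X]) = (X - C 1) ^ 2 ^ ν * q := by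
    rw [hfac, pow_expChar_pow_mul_sub_one 2, C_1]
  rw [hfactor, IsLocalization.span_singleton_algebraMap_mul_of_mem hmem,
    ← Nat.card_congr (Localization.quotientMapEquivOfIsUnit M _ hunits).toEquiv,
    natCard_quotient_span_monic ((monic_geom_sum_X hodd.pos.ne').pow _), hdeg, Nat.card_zmod]

theorem stmt_8 (n ν n' : ℕ) (hn : 0 < n) (hfac : n = 2 ^ ν * n') (hodd : Odd n') :
    Nat.card
        (Localization (Submonoid.closure {(X : (ZMod 2)[X]), X + 1}) ⧸
          Ideal.span
            {algebraMap (ZMod 2)[X]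
                (Localization (Submonoid.closure {(X : (ZMod 2)[X]), X + 1}))
                (X ^ n - 1)}) = 2 ^ (n - 2 ^ ν) :=
  stmt_8_general n ν n' hfac hodd
end

section
/- Let h : ℝ^d → ℝ be Lipschitz and positively homogeneous of degree one (h(λu) = λh(u) for all λ ≥ 0), and suppose there is a constant C > 0 such that h(n) ≥ C for every nonzero n ∈ ℤ^d. Then h(v) > 0 for every nonzero v ∈ ℝ^d. -/
theorem stmt_14 (d : ℕ) (h : EuclideanSpace ℝ (Fin d) → ℝ) (K : NNReal)
    (hlip : LipschitzWith K h)
    (hhom : ∀ lam : ℝ, 0 ≤ lam → ∀ u, h (lam • u) = lam * h u)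
    (C : ℝ) (hC : 0 < C)
    (hlb : ∀ n : Fin d → ℤ, n ≠ 0 → C ≤ h (WithLp.toLp 2 (fun i => (n i : ℝ)))) :
    ∀ v : EuclideanSpace ℝ (Fin d), v ≠ 0 → 0 < h v := by
  intro v hv
  -- Simultaneous approximation: for any ε > 0 there are N ≥ 1 and m ∈ ℤ^d with ‖N•v - m‖ < ε
  have approx : ∀ ε : ℝ, 0 < ε → ∃ (N : ℕ) (m : Fin d → ℤ),
      1 ≤ N ∧ ‖(N : ℝ) • v - (show EuclideanSpace ℝ (Fin d) from WithLp.toLp 2 fun i => (m i : ℝ))‖ < ε := by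
    intro ε hε
    set u : ℕ → EuclideanSpace ℝ (Fin d) :=
      fun N => WithLp.toLp 2 (fun i => Int.fract ((N : ℝ) * v i)) with hu
    have hmem : ∀ N, u N ∈ Metric.closedBall (0 : EuclideanSpace ℝ (Fin d)) (Real.sqrt d) := by
      intro N
      rw [Metric.mem_closedBall, dist_zero_right, EuclideanSpace.norm_eq]
      apply Real.sqrt_le_sqrt
      calc ∑ i, ‖u N i‖ ^ 2 ≤ ∑ _i : Fin d, (1 : ℝ) := by
            apply Finset.sum_le_sum
            intro i _
            have h1 : |Int.fract ((N : ℝ) * v i)| ≤ 1 :=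
              le_of_lt (by rw [abs_of_nonneg (Int.fract_nonneg _)]; exact Int.fract_lt_one _)
            calc ‖u N i‖ ^ 2 = |Int.fract ((N : ℝ) * v i)| ^ 2 := by
                  simp [hu, Real.norm_eq_abs]
              _ ≤ 1 ^ 2 := by
                  apply pow_le_pow_left₀ (abs_nonneg _) h1
              _ = 1 := one_pow 2
        _ = (d : ℝ) := by simp
    obtain ⟨x, -, φ, hφ, hconv⟩ :=
      (isCompact_closedBall (0 : EuclideanSpace ℝ (Fin d)) (Real.sqrt d)).tendsto_subseq hmem
    rw [Metric.tendsto_atTop] at hconv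
    obtain ⟨M, hM⟩ := hconv (ε / 2) (by linarith)
    have hlt : φ M < φ (M + 1) := hφ (Nat.lt_succ_self M)
    refine ⟨φ (M + 1) - φ M,
      fun i => ⌊(φ (M + 1) : ℝ) * v i⌋ - ⌊(φ M : ℝ) * v i⌋, by omega, ?_⟩
    have hkey : ((φ (M + 1) - φ M : ℕ) : ℝ) • v -
        (show EuclideanSpace ℝ (Fin d) from WithLp.toLp 2 fun i => ((⌊(φ (M + 1) : ℝ) * v i⌋ - ⌊(φ M : ℝ) * v i⌋ : ℤ) : ℝ))
        = u (φ (M + 1)) - u (φ M) := by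
      ext i
      have hc : ((φ (M + 1) - φ M : ℕ) : ℝ) = (φ (M + 1) : ℝ) - (φ M : ℝ) := by
        push_cast [Nat.cast_sub hlt.le]; ring
      simp only [PiLp.sub_apply, PiLp.smul_apply, PiLp.toLp_apply, smul_eq_mul, hu, Int.fract]
      rw [hc]
      push_cast
      ring
    rw [hkey]
    have h1 := hM (M + 1) (by omega)
    have h2 := hM M le_rfl
    calc ‖u (φ (M + 1)) - u (φ M)‖ = dist (u (φ (M + 1))) (u (φ M)) := (dist_eq_norm _ _).symm
      _ ≤ dist (u (φ (M + 1))) x + dist (u (φ M)) x := dist_triangle_right _ _ _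
      _ < ε / 2 + ε / 2 := by exact add_lt_add h1 h2
      _ = ε := by ring
  -- Main argument
  have hvnorm : (0 : ℝ) < ‖v‖ := norm_pos_iff.mpr hv
  set ε : ℝ := min (C / (2 * ((K : ℝ) + 1))) (‖v‖ / 2) with hε_def
  have hKnn : (0 : ℝ) ≤ (K : ℝ) := K.coe_nonneg
  have hε : 0 < ε := lt_min (by positivity) (by positivity)
  obtain ⟨N, m, hN1, hNm⟩ := approx ε hε
  have hNreal : (1 : ℝ) ≤ (N : ℝ) := by exact_mod_cast hN1
  set w : EuclideanSpace ℝ (Fin d) := WithLp.toLp 2 (fun i => (m i : ℝ)) with hw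
  have hεv : ε ≤ ‖v‖ / 2 := min_le_right _ _
  have hεC : ε ≤ C / (2 * ((K : ℝ) + 1)) := min_le_left _ _
  -- m ≠ 0
  have hwnorm : 0 < ‖w‖ := by
    have h1 : ‖(N : ℝ) • v‖ - ‖w‖ ≤ ‖(N : ℝ) • v - w‖ := norm_sub_norm_le _ _
    have h2 : ‖(N : ℝ) • v‖ = (N : ℝ) * ‖v‖ := by
      rw [norm_smul, Real.norm_natCast]
    nlinarith [hNm]
  have hm0 : m ≠ 0 := by
    intro h0
    have : w = 0 := by
      ext i
      simp [hw, h0]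
    rw [this, norm_zero] at hwnorm
    exact lt_irrefl 0 hwnorm
  have hCm : C ≤ h w := hlb m hm0
  -- Lipschitz estimate
  have hdist : dist (h w) (h ((N : ℝ) • v)) ≤ (K : ℝ) * ε := by
    calc dist (h w) (h ((N : ℝ) • v)) ≤ (K : ℝ) * dist w ((N : ℝ) • v) :=
          hlip.dist_le_mul _ _
      _ = (K : ℝ) * ‖(N : ℝ) • v - w‖ := by rw [dist_eq_norm, norm_sub_rev]
      _ ≤ (K : ℝ) * ε := mul_le_mul_of_nonneg_left hNm.le hKnn
  have hhomN : h ((N : ℝ) • v) = (N : ℝ) * h v := hhom _ (by positivity) v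
  have habs : |h w - h ((N : ℝ) • v)| ≤ (K : ℝ) * ε := by
    rw [← Real.dist_eq]; exact hdist
  have hKε : (K : ℝ) * ε ≤ C / 2 := by
    have h2 : ε * (2 * ((K : ℝ) + 1)) ≤ C := by
      rw [← le_div_iff₀ (by positivity)]; exact hεC
    nlinarith
  have hlow : C / 2 ≤ (N : ℝ) * h v := by
    have := abs_le.mp habs
    rw [hhomN] at this
    linarith [this.1, this.2]
  by_contra hcon
  push_neg at hcon
  nlinarith
end
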